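/- Let u, v : ℝ² → ℝ be smooth functions of (x,t₁) solving the first commuting flow u_{t₁} = Q₁ᵘ, v_{t₁} = Q₁ᵛ, and suppose there is a compact set K ⊆ ℝ such that for every t₁ the functions x ↦ u(x,t₁) and x ↦ v(x,t₁) are supported in K. Then the function t₁ ↦ ∫_ℝ (2u² − uv + v²/9) dx is constant; that is, ℋ₁ = ∫ H₁ dx is a conserved quantity of the first commuting flow. -/

import Mathlib

open MeasureTheory

/-- First component `Q₁ᵘ` of the first commuting flow of the KKS hierarchy. -/
noncomputable def Q1u (u v : ℝ → ℝ) (x : ℝ) : ℝ :=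
  2 * iteratedDeriv 5 u x - (5 / 9) * iteratedDeriv 5 v x
    - 20 * u x * iteratedDeriv 3 u x + (50 / 9) * u x * iteratedDeriv 3 v x
    + (40 / 9) * v x * iteratedDeriv 3 u x - (10 / 9) * v x * iteratedDeriv 3 v x
    - 50 * deriv u x * iteratedDeriv 2 u x + (125 / 9) * deriv u x * iteratedDeriv 2 v x
    + (40 / 3) * deriv v x * iteratedDeriv 2 u x - (10 / 3) * deriv v x * iteratedDeriv 2 v x
    - (40 / 3) * u x * v x * deriv u x + (20 / 9) * u x * v x * deriv v x
    + 40 * (u x) ^ 2 * deriv u x - (80 / 9) * (u x) ^ 2 * deriv v x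
    + (5 / 9) * (v x) ^ 2 * deriv u x

/-- Second component `Q₁ᵛ` of the first commuting flow of the KKS hierarchy. -/
noncomputable def Q1v (u v : ℝ → ℝ) (x : ℝ) : ℝ :=
  5 * iteratedDeriv 5 u x - (4 / 3) * iteratedDeriv 5 v x
    - 40 * u x * iteratedDeriv 3 u x + 10 * u x * iteratedDeriv 3 v x
    + (10 / 3) * v x * iteratedDeriv 3 u x - (5 / 9) * v x * iteratedDeriv 3 v x
    - 120 * deriv u x * iteratedDeriv 2 u x + 30 * deriv u x * iteratedDeriv 2 v x
    + (80 / 3) * deriv v x * iteratedDeriv 2 u x - (55 / 9) * deriv v x * iteratedDeriv 2 v x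
    + (160 / 3) * u x * v x * deriv u x - 20 * u x * v x * deriv v x
    + (40 / 3) * (u x) ^ 2 * deriv v x - (40 / 3) * (v x) ^ 2 * deriv u x
    + (35 / 9) * (v x) ^ 2 * deriv v x

/- ---------- auxiliary lemmas ---------- -/

lemma aux_contDiff_iteratedDeriv (f : ℝ → ℝ) (hf : ContDiff ℝ (⊤ : ℕ∞) f) (n : ℕ) :
    ContDiff ℝ (⊤ : ℕ∞) (iteratedDeriv n f) := by
  induction n with
  | zero => simpa [iteratedDeriv_zero]
  | succ n ih => rw [iteratedDeriv_succ]; exact (contDiff_infty_iff_deriv.mp ih).2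

lemma aux_hcs_iteratedDeriv (f : ℝ → ℝ) (h : HasCompactSupport f) (n : ℕ) :
    HasCompactSupport (iteratedDeriv n f) := by
  induction n with
  | zero => simpa [iteratedDeriv_zero]
  | succ n ih => rw [iteratedDeriv_succ]; exact ih.deriv

lemma aux_integral_deriv_eq_zero (f : ℝ → ℝ) (hf : ContDiff ℝ 1 f)
    (h2 : HasCompactSupport f) : ∫ x, deriv f x = 0 := by
  have h1 := h2.integral_Iic_deriv_eq hf 0
  have h3 := h2.integral_Ioi_deriv_eq hf 0
  have hint : Integrable (deriv f) :=
    (hf.continuous_deriv le_rfl).integrable_of_hasCompactSupport h2.deriv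
  rw [← intervalIntegral.integral_Iic_add_Ioi hint.integrableOn hint.integrableOn, h1, h3]
  ring

/-- The density `P` whose `x`-derivative equals `∂ₜH₁` along the flow. -/
noncomputable def Pfun (f g : ℝ → ℝ) (y : ℝ) : ℝ :=
  ((7 : ℝ)/54) * (iteratedDeriv 2 g y * iteratedDeriv 2 g y) +
      ((-7 : ℝ)/27) * (iteratedDeriv 1 g y * iteratedDeriv 3 g y) +
      ((7 : ℝ)/27) * (g y * iteratedDeriv 4 g y) +
      ((80 : ℝ)/81) * (g y * g y * iteratedDeriv 2 g y) +
      ((35 : ℝ)/162) * (g y * g y * g y * g y) +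
      ((-8 : ℝ)/9) * (iteratedDeriv 4 f y * g y) +
      ((8 : ℝ)/9) * (iteratedDeriv 3 f y * iteratedDeriv 1 g y) +
      ((-8 : ℝ)/9) * (iteratedDeriv 2 f y * iteratedDeriv 2 g y) +
      ((-100 : ℝ)/27) * (iteratedDeriv 2 f y * g y * g y) +
      ((3 : ℝ)/2) * (iteratedDeriv 2 f y * iteratedDeriv 2 f y) +
      ((8 : ℝ)/9) * (iteratedDeriv 1 f y * iteratedDeriv 3 g y) +
      (-3 : ℝ) * (iteratedDeriv 1 f y * iteratedDeriv 3 f y) +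
      ((-10 : ℝ)/9) * (iteratedDeriv 1 f y * iteratedDeriv 1 f y * g y) +
      ((-8 : ℝ)/9) * (f y * iteratedDeriv 4 g y) +
      ((-65 : ℝ)/9) * (f y * g y * iteratedDeriv 2 g y) +
      ((-95 : ℝ)/27) * (f y * g y * g y * g y) +
      (3 : ℝ) * (f y * iteratedDeriv 4 f y) +
      ((230 : ℝ)/9) * (f y * iteratedDeriv 2 f y * g y) +
      ((10 : ℝ)/9) * (f y * iteratedDeriv 1 f y * iteratedDeriv 1 g y) +
      ((110 : ℝ)/9) * (f y * f y * iteratedDeriv 2 g y) +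
      ((550 : ℝ)/27) * (f y * f y * g y * g y) +
      (-40 : ℝ) * (f y * f y * iteratedDeriv 2 f y) +
      ((-440 : ℝ)/9) * (f y * f y * f y * g y) +
      (40 : ℝ) * (f y * f y * f y * f y)

lemma Pfun_hasDerivAt (f g : ℝ → ℝ) (hf : ContDiff ℝ (⊤ : ℕ∞) f)
    (hg : ContDiff ℝ (⊤ : ℕ∞) g) (x : ℝ) :
    HasDerivAt (Pfun f g)
      ((4 * f x - g x) * Q1u f g x + (2 / 9 * g x - f x) * Q1v f g x) x := by
  have keyf : ∀ n : ℕ, HasDerivAt (iteratedDeriv n f) (iteratedDeriv (n + 1) f x) x := by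
    intro n
    rw [iteratedDeriv_succ]
    exact (((aux_contDiff_iteratedDeriv f hf n).differentiable (by simp)) x).hasDerivAt
  have keyg : ∀ n : ℕ, HasDerivAt (iteratedDeriv n g) (iteratedDeriv (n + 1) g x) x := by
    intro n
    rw [iteratedDeriv_succ]
    exact (((aux_contDiff_iteratedDeriv g hg n).differentiable (by simp)) x).hasDerivAt
  have hu0 : HasDerivAt f (iteratedDeriv 1 f x) x := by
    simpa [iteratedDeriv_zero] using keyf 0
  have hv0 : HasDerivAt g (iteratedDeriv 1 g x) x := by
    simpa [iteratedDeriv_zero] using keyg 0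
  have hu1 := keyf 1; have hu2 := keyf 2; have hu3 := keyf 3; have hu4 := keyf 4
  have hv1 := keyg 1; have hv2 := keyg 2; have hv3 := keyg 3; have hv4 := keyg 4
  norm_num only at hu1 hu2 hu3 hu4 hv1 hv2 hv3 hv4
  have H :=
    (((((((((((((((((((((((((hv2.mul hv2).const_mul ((7 : ℝ)/54)).add
    ((hv1.mul hv3).const_mul ((-7 : ℝ)/27))).add
    ((hv0.mul hv4).const_mul ((7 : ℝ)/27))).add
    (((hv0.mul hv0).mul hv2).const_mul ((80 : ℝ)/81))).add
    ((((hv0.mul hv0).mul hv0).mul hv0).const_mul ((35 : ℝ)/162))).add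
    ((hu4.mul hv0).const_mul ((-8 : ℝ)/9))).add
    ((hu3.mul hv1).const_mul ((8 : ℝ)/9))).add
    ((hu2.mul hv2).const_mul ((-8 : ℝ)/9))).add
    (((hu2.mul hv0).mul hv0).const_mul ((-100 : ℝ)/27))).add
    ((hu2.mul hu2).const_mul ((3 : ℝ)/2))).add
    ((hu1.mul hv3).const_mul ((8 : ℝ)/9))).add
    ((hu1.mul hu3).const_mul (-3 : ℝ))).add
    (((hu1.mul hu1).mul hv0).const_mul ((-10 : ℝ)/9))).add
    ((hu0.mul hv4).const_mul ((-8 : ℝ)/9))).add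
    (((hu0.mul hv0).mul hv2).const_mul ((-65 : ℝ)/9))).add
    ((((hu0.mul hv0).mul hv0).mul hv0).const_mul ((-95 : ℝ)/27))).add
    ((hu0.mul hu4).const_mul (3 : ℝ))).add
    (((hu0.mul hu2).mul hv0).const_mul ((230 : ℝ)/9))).add
    (((hu0.mul hu1).mul hv1).const_mul ((10 : ℝ)/9))).add
    (((hu0.mul hu0).mul hv2).const_mul ((110 : ℝ)/9))).add
    ((((hu0.mul hu0).mul hv0).mul hv0).const_mul ((550 : ℝ)/27))).add
    (((hu0.mul hu0).mul hu2).const_mul (-40 : ℝ))).add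
    ((((hu0.mul hu0).mul hu0).mul hv0).const_mul ((-440 : ℝ)/9))).add
    ((((hu0.mul hu0).mul hu0).mul hu0).const_mul (40 : ℝ)))
  refine H.congr_deriv ?_
  simp only [Q1u, Q1v, ← iteratedDeriv_one, Pi.mul_apply]
  ring

lemma aux_iteratedDeriv_zero_fun (n : ℕ) :
    iteratedDeriv n (fun _ : ℝ => (0 : ℝ)) = fun _ => 0 := by
  induction n with
  | zero => simp [iteratedDeriv_zero]
  | succ n ih => rw [iteratedDeriv_succ, ih]; funext y; simp

lemma aux_iteratedDeriv_vanish (f : ℝ → ℝ) (K : Set ℝ) (hKc : IsClosed K)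
    (hs : Function.support f ⊆ K) (n : ℕ) : ∀ x ∉ K, iteratedDeriv n f x = 0 := by
  intro x hx
  have h1 : Set.EqOn f (fun _ => (0 : ℝ)) Kᶜ := by
    intro y hy
    by_contra h
    exact hy (hs h)
  have h2 := h1.iteratedDeriv_of_isOpen hKc.isOpen_compl n
  have := h2 hx
  rw [aux_iteratedDeriv_zero_fun n] at this
  exact this

lemma Pfun_contDiff (f g : ℝ → ℝ) (hf : ContDiff ℝ (⊤ : ℕ∞) f)
    (hg : ContDiff ℝ (⊤ : ℕ∞) g) : ContDiff ℝ (⊤ : ℕ∞) (Pfun f g) := by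
  have hf1 := aux_contDiff_iteratedDeriv f hf 1
  have hf2 := aux_contDiff_iteratedDeriv f hf 2
  have hf3 := aux_contDiff_iteratedDeriv f hf 3
  have hf4 := aux_contDiff_iteratedDeriv f hf 4
  have hg1 := aux_contDiff_iteratedDeriv g hg 1
  have hg2 := aux_contDiff_iteratedDeriv g hg 2
  have hg3 := aux_contDiff_iteratedDeriv g hg 3
  have hg4 := aux_contDiff_iteratedDeriv g hg 4
  unfold Pfun
  fun_prop

lemma Pfun_hasCompactSupport (f g : ℝ → ℝ) (K : Set ℝ) (hK : IsCompact K)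
    (hsf : Function.support f ⊆ K) (hsg : Function.support g ⊆ K) :
    HasCompactSupport (Pfun f g) := by
  apply HasCompactSupport.intro hK
  intro x hx
  have hf0 : f x = 0 := by
    by_contra h; exact hx (hsf h)
  have hg0 : g x = 0 := by
    by_contra h; exact hx (hsg h)
  have hfi := aux_iteratedDeriv_vanish f K hK.isClosed hsf
  have hgi := aux_iteratedDeriv_vanish g K hK.isClosed hsg
  simp only [Pfun, hf0, hg0, hfi 1 x hx, hfi 2 x hx, hfi 3 x hx, hfi 4 x hx,
    hgi 1 x hx, hgi 2 x hx, hgi 3 x hx, hgi 4 x hx]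
  ring

/-- The time derivative density of `H₁` along the flow, written via joint `fderiv`s. -/
noncomputable def Wfun (u v : ℝ → ℝ → ℝ) (p : ℝ × ℝ) : ℝ :=
  (4 * Function.uncurry u p - Function.uncurry v p)
      * fderiv ℝ (Function.uncurry u) p ((0 : ℝ), (1 : ℝ))
    + (2 / 9 * Function.uncurry v p - Function.uncurry u p)
      * fderiv ℝ (Function.uncurry v) p ((0 : ℝ), (1 : ℝ))

lemma Wfun_continuous (u v : ℝ → ℝ → ℝ) (hu : ContDiff ℝ (⊤ : ℕ∞) (Function.uncurry u))
    (hv : ContDiff ℝ (⊤ : ℕ∞) (Function.uncurry v)) : Continuous (Wfun u v) := by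
  have h1 : Continuous (fun p : ℝ × ℝ => fderiv ℝ (Function.uncurry u) p ((0 : ℝ), (1 : ℝ))) :=
    (hu.continuous_fderiv (by simp)).clm_apply continuous_const
  have h2 : Continuous (fun p : ℝ × ℝ => fderiv ℝ (Function.uncurry v) p ((0 : ℝ), (1 : ℝ))) :=
    (hv.continuous_fderiv (by simp)).clm_apply continuous_const
  exact (((continuous_const.mul hu.continuous).sub hv.continuous).mul h1).add
    (((continuous_const.mul hv.continuous).sub hu.continuous).mul h2)

lemma uncurry_hasDerivAt (u : ℝ → ℝ → ℝ) (hu : ContDiff ℝ (⊤ : ℕ∞) (Function.uncurry u)) (x t : ℝ) :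
    HasDerivAt (fun s => u x s) (fderiv ℝ (Function.uncurry u) (x, t) ((0 : ℝ), (1 : ℝ))) t := by
  have hline : HasDerivAt (fun s : ℝ => ((x, s) : ℝ × ℝ)) ((0 : ℝ), (1 : ℝ)) t :=
    (hasDerivAt_const t x).prodMk (hasDerivAt_id t)
  exact ((hu.differentiable (by simp) (x, t)).hasFDerivAt).comp_hasDerivAt t hline

/-- For any smooth solution `(u, v)` of the first commuting flow
`u_{t₁} = Q₁ᵘ, v_{t₁} = Q₁ᵛ` whose `x`-supports are contained in a fixed compact set
`K` for all times, the functional `ℋ₁ = ∫ (2u² − uv + v²/9) dx` is conserved. -/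
theorem first_flow_conserved_H1 (u v : ℝ → ℝ → ℝ)
    (hu : ContDiff ℝ (⊤ : ℕ∞) (Function.uncurry u)) (hv : ContDiff ℝ (⊤ : ℕ∞) (Function.uncurry v))
    (hut : ∀ x t : ℝ, deriv (fun s => u x s) t = Q1u (fun y => u y t) (fun y => v y t) x)
    (hvt : ∀ x t : ℝ, deriv (fun s => v x s) t = Q1v (fun y => u y t) (fun y => v y t) x)
    (K : Set ℝ) (hK : IsCompact K)
    (hsupp : ∀ t : ℝ, (Function.support fun x => u x t) ⊆ K ∧
                      (Function.support fun x => v x t) ⊆ K) :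
    ∀ t₁ t₂ : ℝ,
      (∫ x : ℝ, (2 * (u x t₁) ^ 2 - u x t₁ * v x t₁ + (v x t₁) ^ 2 / 9))
      = ∫ x : ℝ, (2 * (u x t₂) ^ 2 - u x t₂ * v x t₂ + (v x t₂) ^ 2 / 9) := by
  have hu' : ContDiff ℝ (⊤ : ℕ∞) (Function.uncurry u) := hu.of_le (by simp)
  have hv' : ContDiff ℝ (⊤ : ℕ∞) (Function.uncurry v) := hv.of_le (by simp)
  have hzero : ∀ x t : ℝ, x ∉ K → u x t = 0 ∧ v x t = 0 := by
    intro x t hx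
    constructor
    · by_contra h; exact hx ((hsupp t).1 h)
    · by_contra h; exact hx ((hsupp t).2 h)
  have hft : ∀ t : ℝ, ContDiff ℝ (⊤ : ℕ∞) (fun y => u y t) := fun t =>
    hu'.comp (contDiff_id.prodMk contDiff_const)
  have hgt : ∀ t : ℝ, ContDiff ℝ (⊤ : ℕ∞) (fun y => v y t) := fun t =>
    hv'.comp (contDiff_id.prodMk contDiff_const)
  -- pointwise time derivative of the density
  have hHt : ∀ x t : ℝ,
      HasDerivAt (fun s => 2 * (u x s) ^ 2 - u x s * v x s + (v x s) ^ 2 / 9)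
        (Wfun u v (x, t)) t := by
    intro x t
    have h1 := uncurry_hasDerivAt u hu x t
    have h2 := uncurry_hasDerivAt v hv x t
    have H := (((h1.pow 2).const_mul (2 : ℝ)).sub (h1.mul h2)).add ((h2.pow 2).div_const (9 : ℝ))
    refine H.congr_deriv ?_
    simp only [Wfun, Function.uncurry]
    ring
  -- the spatial integral of the time derivative vanishes
  have hWint : ∀ t : ℝ, ∫ x : ℝ, Wfun u v (x, t) = 0 := by
    intro t
    have hfd : ∀ x : ℝ, Wfun u v (x, t)
        = deriv (Pfun (fun y => u y t) (fun y => v y t)) x := by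
      intro x
      have hP := Pfun_hasDerivAt (fun y => u y t) (fun y => v y t) (hft t) (hgt t) x
      rw [hP.deriv]
      have e1 : fderiv ℝ (Function.uncurry u) (x, t) ((0 : ℝ), (1 : ℝ))
          = Q1u (fun y => u y t) (fun y => v y t) x :=
        ((uncurry_hasDerivAt u hu x t).deriv).symm.trans (hut x t)
      have e2 : fderiv ℝ (Function.uncurry v) (x, t) ((0 : ℝ), (1 : ℝ))
          = Q1v (fun y => u y t) (fun y => v y t) x :=
        ((uncurry_hasDerivAt v hv x t).deriv).symm.trans (hvt x t)
      simp only [Wfun, Function.uncurry, e1, e2]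
    calc (∫ x : ℝ, Wfun u v (x, t))
        = ∫ x : ℝ, deriv (Pfun (fun y => u y t) (fun y => v y t)) x := by
          exact integral_congr_ae (Filter.Eventually.of_forall hfd)
      _ = 0 := aux_integral_deriv_eq_zero _
          ((Pfun_contDiff _ _ (hft t) (hgt t)).of_le (by exact_mod_cast le_top))
          (Pfun_hasCompactSupport _ _ K hK (hsupp t).1 (hsupp t).2)
  -- the density is integrable in x for each t
  have hHcs : ∀ t : ℝ, HasCompactSupport
      (fun x => 2 * (u x t) ^ 2 - u x t * v x t + (v x t) ^ 2 / 9) := by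
    intro t
    apply HasCompactSupport.intro hK
    intro x hx
    obtain ⟨h1, h2⟩ := hzero x t hx
    simp [h1, h2]
  have hHcont : ∀ t : ℝ, Continuous
      (fun x => 2 * (u x t) ^ 2 - u x t * v x t + (v x t) ^ 2 / 9) := by
    intro t
    have h1 := (hft t).continuous
    have h2 := (hgt t).continuous
    fun_prop
  have hHint : ∀ t : ℝ, Integrable
      (fun x => 2 * (u x t) ^ 2 - u x t * v x t + (v x t) ^ 2 / 9) := fun t =>
    (hHcont t).integrable_of_hasCompactSupport (hHcs t)
  -- differentiation under the integral sign
  have hF : ∀ t₀ : ℝ,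
      HasDerivAt (fun t => ∫ x : ℝ, (2 * (u x t) ^ 2 - u x t * v x t + (v x t) ^ 2 / 9))
        0 t₀ := by
    intro t₀
    have hWc := Wfun_continuous u v hu hv
    obtain ⟨M, hM⟩ := (hK.prod (isCompact_Icc (a := t₀ - 1) (b := t₀ + 1))).exists_bound_of_continuousOn
      hWc.continuousOn
    have key := hasDerivAt_integral_of_dominated_loc_of_deriv_le
      (F := fun t x => 2 * (u x t) ^ 2 - u x t * v x t + (v x t) ^ 2 / 9)
      (F' := fun t x => Wfun u v (x, t))
      (bound := K.indicator fun _ => M) (μ := volume) (x₀ := t₀) (Metric.ball_mem_nhds t₀ one_pos)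
      (Filter.Eventually.of_forall fun t => (hHcont t).aestronglyMeasurable)
      (hHint t₀)
      ((hWc.comp (continuous_id.prodMk continuous_const)).aestronglyMeasurable)
      ?_ ?_ ?_
    · have := key.2
      rwa [hWint t₀] at this
    · refine Filter.Eventually.of_forall fun x => fun t ht => ?_
      by_cases hx : x ∈ K
      · rw [Set.indicator_of_mem hx]
        refine hM (x, t) ⟨hx, ?_⟩
        rw [Metric.mem_ball, Real.dist_eq] at ht
        constructor <;> [linarith [abs_lt.mp ht]; linarith [(abs_lt.mp ht).2]]
      · rw [Set.indicator_of_notMem hx]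
        obtain ⟨h1, h2⟩ := hzero x t hx
        simp [Wfun, Function.uncurry, h1, h2]
    · rw [integrable_indicator_iff hK.isClosed.measurableSet]
      exact (integrableOn_const_iff).mpr (Or.inr hK.measure_lt_top)
    · exact Filter.Eventually.of_forall fun x => fun t _ => hHt x t
  intro t₁ t₂
  exact is_const_of_deriv_eq_zero (fun t => (hF t).differentiableAt)
    (fun t => (hF t).deriv) t₁ t₂
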